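/- arXiv:1904.05961 — 5 statements merged into one kernel-verified Lean document; each statement's English description precedes it below -/
import Mathlib

section
/- Let k ≥ 1 and let Q = {q_1,…,q_k} ⊂ ℝ^d be a set of k centers achieving the optimal k-clustering cost, i.e., c(P,Q) = opt(P,k), and let {P_1,…,P_k} be the induced partition of P (each p ∈ P_i has q_i among its closest centers in Q). If opt(P,k) − opt(P,2k) ≤ ε' for some ε' > 0, then for every i ∈ {1,…,k} with P_i nonempty, opt(P_i,1) − opt(P_i,2) ≤ ε'. (Lemma 1) -/
open scoped Classical

/-- Points of `ℝ^d` with the Euclidean norm. -/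
abbrev Pt (d : ℕ) := EuclideanSpace ℝ (Fin d)

/-- Weighted clustering cost `c(P,Q) = Σ_{p∈P} w_p · (min_{q∈Q} ‖p−q‖)^z`
(the minimum is expressed as an infimum, which agrees with the minimum
for nonempty finite `Q`). -/
noncomputable def cCost {d : ℕ} (z : ℝ) (w : Pt d → ℝ) (P Q : Finset (Pt d)) : ℝ :=
  ∑ p ∈ P, w p * (sInf ((fun q => dist p q) '' (Q : Set (Pt d)))) ^ z

/-- Optimal `k`-clustering cost `opt(P,k) = inf { c(P,Q) : |Q| = k }`. -/
noncomputable def optCost {d : ℕ} (z : ℝ) (w : Pt d → ℝ) (P : Finset (Pt d)) (k : ℕ) : ℝ :=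
  sInf { r : ℝ | ∃ Q : Finset (Pt d), Q.card = k ∧ r = cCost z w P Q }

/-!
Let `A` be the cluster of `q` and `B = P \ A`. For any two centers `Q₂`, the `2k` centers
`f(B) ∪ Q₂` (padded to exactly `2k`) serve `B` at least as well as `Q` does and `A` at least as
well as `Q₂` does, so `opt(P,2k) ≤ c(A,Q₂) + c(B,Q)`. Since `opt(P,k) = c(A,{q}) + c(B,Q)` and
`opt(A,1) ≤ c(A,{q})`, this gives `opt(A,1) - opt(A,2) ≤ opt(P,k) - opt(P,2k)`.
In dimension `0` there are no two distinct centers and both `opt(·,2)` and `opt(·,2k)` are the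
junk value `sInf ∅ = 0`, where the inequality reduces to `opt(A,1) ≤ opt(P,k)`.
-/

open Metric Finset

theorem sInf_image_dist_eq_infDist {X : Type*} [PseudoMetricSpace X] (x : X) (s : Set X) :
    sInf ((fun y => dist x y) '' s) = infDist x s := by
  rw [infDist_eq_iInf, sInf_image']

section Cost

variable {d : ℕ} {z : ℝ} {w : Pt d → ℝ} {P Q Q' : Finset (Pt d)} {n : ℕ}

theorem cCost_eq_sum_infDist (z : ℝ) (w : Pt d → ℝ) (P Q : Finset (Pt d)) :
    cCost z w P Q = ∑ p ∈ P, w p * infDist p Q ^ z := by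
  simp only [cCost, sInf_image_dist_eq_infDist]

theorem cCost_nonneg (hw : ∀ p ∈ P, 0 ≤ w p) : 0 ≤ cCost z w P Q := by
  rw [cCost_eq_sum_infDist]
  exact sum_nonneg fun p hp => mul_nonneg (hw p hp) (Real.rpow_nonneg infDist_nonneg z)

theorem cCost_le_cCost (hz : 0 ≤ z) (hw : ∀ p ∈ P, 0 ≤ w p)
    (h : ∀ p ∈ P, infDist p Q' ≤ infDist p Q) : cCost z w P Q' ≤ cCost z w P Q := by
  simp only [cCost_eq_sum_infDist]
  exact sum_le_sum fun p hp =>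
    mul_le_mul_of_nonneg_left (Real.rpow_le_rpow infDist_nonneg (h p hp) hz) (hw p hp)

theorem cCost_anti (hz : 0 ≤ z) (hw : ∀ p ∈ P, 0 ≤ w p) (hQ : Q.Nonempty) (h : Q ⊆ Q') :
    cCost z w P Q' ≤ cCost z w P Q :=
  cCost_le_cCost hz hw fun _ _ => infDist_le_infDist_of_subset (mod_cast h) (mod_cast hQ)

theorem cCost_filter_add_cCost_filter_not (z : ℝ) (w : Pt d → ℝ) (P Q : Finset (Pt d))
    (r : Pt d → Prop) [DecidablePred r] :
    cCost z w (P.filter r) Q + cCost z w (P.filter fun p => ¬ r p) Q = cCost z w P Q :=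
  sum_filter_add_sum_filter_not P r _

theorem optCost_le_cCost (hw : ∀ p ∈ P, 0 ≤ w p) (hQ : Q.card = n) :
    optCost z w P n ≤ cCost z w P Q :=
  csInf_le ⟨0, by rintro r ⟨Q', _, rfl⟩; exact cCost_nonneg hw⟩ ⟨Q, hQ, rfl⟩

theorem optCost_le_cCost_of_card_le [Infinite (Pt d)] (hz : 0 ≤ z) (hw : ∀ p ∈ P, 0 ≤ w p)
    (hQ : Q.Nonempty) (hn : Q.card ≤ n) : optCost z w P n ≤ cCost z w P Q := by
  obtain ⟨Q', hQQ', hQ'⟩ := Infinite.exists_superset_card_eq Q n hn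
  exact (optCost_le_cCost hw hQ').trans (cCost_anti hz hw hQ hQQ')

theorem le_optCost [Infinite (Pt d)] {r : ℝ}
    (h : ∀ Q : Finset (Pt d), Q.card = n → r ≤ cCost z w P Q) :
    r ≤ optCost z w P n := by
  obtain ⟨Q, hQ⟩ := Infinite.exists_subset_card_eq (Pt d) n
  refine le_csInf ⟨_, Q, hQ, rfl⟩ ?_
  rintro _ ⟨Q, hQ, rfl⟩
  exact h Q hQ

theorem optCost_of_subsingleton [Subsingleton (Pt d)] (hn : 2 ≤ n) : optCost z w P n = 0 := by
  rw [optCost]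
  convert Real.sInf_empty
  refine Set.eq_empty_of_forall_notMem ?_
  rintro _ ⟨Q, hQ, -⟩
  have := Finset.card_le_one_of_subsingleton Q
  omega

end Cost

section Cluster

variable {d : ℕ} {z : ℝ} {w : Pt d → ℝ} {P Q S : Finset (Pt d)} {f : Pt d → Pt d}

theorem cCost_le_of_nearest (hz : 0 ≤ z) (hw : ∀ p ∈ P, 0 ≤ w p)
    (hS : ∀ p ∈ P, f p ∈ S) (hf : ∀ p ∈ P, dist p (f p) = infDist p Q) :
    cCost z w P S ≤ cCost z w P Q :=
  cCost_le_cCost hz hw fun p hp => hf p hp ▸ infDist_le_dist_of_mem (mod_cast hS p hp)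

theorem cCost_cluster_eq_cCost_singleton (hf : ∀ p ∈ P, dist p (f p) = infDist p Q)
    (q : Pt d) :
    cCost z w (P.filter (f · = q)) Q = cCost z w (P.filter (f · = q)) {q} := by
  simp only [cCost_eq_sum_infDist, coe_singleton, infDist_singleton]
  refine sum_congr rfl fun p hp => ?_
  obtain ⟨hpP, rfl⟩ := mem_filter.1 hp
  rw [hf p hpP]

theorem optCost_two_mul_sub_le_optCost_cluster_two [Infinite (Pt d)] (hz : 0 ≤ z)
    (hw : ∀ p ∈ P, 0 ≤ w p) {k : ℕ} (hQ : Q.card = k) (hfQ : ∀ p ∈ P, f p ∈ Q)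
    (hf : ∀ p ∈ P, dist p (f p) = infDist p Q) {q : Pt d} (hq : q ∈ Q) :
    optCost z w P (2 * k) - cCost z w (P.filter fun p => ¬ f p = q) Q
      ≤ optCost z w (P.filter (f · = q)) 2 := by
  set A := P.filter (f · = q)
  set B := P.filter fun p => ¬ f p = q
  have hwA : ∀ p ∈ A, 0 ≤ w p := fun p hp => hw p (mem_of_mem_filter p hp)
  have hwB : ∀ p ∈ B, 0 ≤ w p := fun p hp => hw p (mem_of_mem_filter p hp)
  have hfB : B.image f ⊆ Q.erase q := fun _ hr => by
    obtain ⟨p, hp, rfl⟩ := mem_image.1 hr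
    exact mem_erase.2 ⟨(mem_filter.1 hp).2, hfQ p (mem_of_mem_filter p hp)⟩
  refine le_optCost fun Q₂ hQ₂ => sub_le_iff_le_add.2 ?_
  have hQ₂ : Q₂.Nonempty := card_pos.1 (by omega)
  have hcard : (B.image f ∪ Q₂).card ≤ 2 * k := by
    have himage := card_le_card hfB
    rw [card_erase_of_mem hq] at himage
    have := card_union_le (B.image f) Q₂
    have := card_pos.2 ⟨q, hq⟩
    omega
  calc optCost z w P (2 * k)
      ≤ cCost z w P (B.image f ∪ Q₂) :=
        optCost_le_cCost_of_card_le hz hw (hQ₂.mono subset_union_right) hcard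
    _ = cCost z w A (B.image f ∪ Q₂) + cCost z w B (B.image f ∪ Q₂) :=
        (cCost_filter_add_cCost_filter_not z w P _ _).symm
    _ ≤ cCost z w A Q₂ + cCost z w B Q :=
        add_le_add (cCost_anti hz hwA hQ₂ subset_union_right)
          (cCost_le_of_nearest hz hwB (fun p hp => mem_union_left _ (mem_image_of_mem f hp))
            fun p hp => hf p (mem_of_mem_filter p hp))

theorem optCost_cluster_gap_le (hz : 0 ≤ z) (hw : ∀ p ∈ P, 0 ≤ w p) {k : ℕ}
    (hQ : Q.card = k) (hQopt : cCost z w P Q = optCost z w P k) (hfQ : ∀ p ∈ P, f p ∈ Q)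
    (hf : ∀ p ∈ P, dist p (f p) = infDist p Q) {q : Pt d} (hq : q ∈ Q) :
    optCost z w (P.filter (f · = q)) 1 - optCost z w (P.filter (f · = q)) 2
      ≤ optCost z w P k - optCost z w P (2 * k) := by
  have hsplit : cCost z w (P.filter (f · = q)) {q} + cCost z w (P.filter fun p => ¬ f p = q) Q
      = optCost z w P k := by
    rw [← cCost_cluster_eq_cCost_singleton hf, cCost_filter_add_cCost_filter_not, hQopt]
  have hA : optCost z w (P.filter (f · = q)) 1 ≤ cCost z w (P.filter (f · = q)) {q} :=
    optCost_le_cCost (fun p hp => hw p (mem_of_mem_filter p hp)) (card_singleton q)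
  rcases subsingleton_or_nontrivial (Pt d) with _ | _
  · have hk : 1 ≤ k := hQ ▸ card_pos.2 ⟨q, hq⟩
    rw [optCost_of_subsingleton le_rfl, optCost_of_subsingleton (n := 2 * k) (by omega)]
    have hB : 0 ≤ cCost z w (P.filter fun p => ¬ f p = q) Q :=
      cCost_nonneg fun p hp => hw p (mem_of_mem_filter p hp)
    linarith
  · have : Infinite (Pt d) := PreconnectedSpace.infinite
    linarith [optCost_two_mul_sub_le_optCost_cluster_two hz hw hQ hfQ hf hq]

end Cluster

theorem lemma1_general {d : ℕ} (z : ℝ) (hz : 0 < z)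
    (P : Finset (Pt d))
    (w : Pt d → ℝ) (hw : ∀ p ∈ P, 0 < w p)
    (k : ℕ)
    (Q : Finset (Pt d)) (hQcard : Q.card = k)
    (hQopt : cCost z w P Q = optCost z w P k)
    (f : Pt d → Pt d)
    (hfQ : ∀ p ∈ P, f p ∈ Q)
    (hfmin : ∀ p ∈ P, dist p (f p) = sInf ((fun q => dist p q) '' (Q : Set (Pt d))))
    (ε' : ℝ)
    (hgap : optCost z w P k - optCost z w P (2 * k) ≤ ε') :
    ∀ q ∈ Q, (P.filter fun p => f p = q).Nonempty →
      optCost z w (P.filter fun p => f p = q) 1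
        - optCost z w (P.filter fun p => f p = q) 2 ≤ ε' := by
  simp only [sInf_image_dist_eq_infDist] at hfmin
  intro q hq _
  exact (optCost_cluster_gap_le hz.le (fun p hp => (hw p hp).le) hQcard hQopt hfQ hfmin hq).trans
    hgap

/-- Lemma 1: if `Q` (with `|Q| = k`) attains `opt(P,k)` and `f` assigns each point of `P`
a closest center in `Q`, then `opt(P,k) − opt(P,2k) ≤ ε'` implies that every nonempty
induced cluster `P_q = {p ∈ P : f p = q}` satisfies `opt(P_q,1) − opt(P_q,2) ≤ ε'`. -/
theorem lemma1 {d : ℕ} (z : ℝ) (hz : 0 < z)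
    (P : Finset (Pt d)) (hP : P.Nonempty)
    (w : Pt d → ℝ) (hw : ∀ p ∈ P, 0 < w p)
    (k : ℕ) (hk : 1 ≤ k)
    (Q : Finset (Pt d)) (hQcard : Q.card = k)
    (hQopt : cCost z w P Q = optCost z w P k)
    (f : Pt d → Pt d)
    (hfQ : ∀ p ∈ P, f p ∈ Q)
    (hfmin : ∀ p ∈ P, dist p (f p) = sInf ((fun q => dist p q) '' (Q : Set (Pt d))))
    (ε' : ℝ) (hε' : 0 < ε')
    (hgap : optCost z w P k - optCost z w P (2 * k) ≤ ε') :
    ∀ q ∈ Q, (P.filter fun p => f p = q).Nonempty →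
      optCost z w (P.filter fun p => f p = q) 1
        - optCost z w (P.filter fun p => f p = q) 2 ≤ ε' :=
  lemma1_general z hz P w hw k Q hQcard hQopt f hfQ hfmin ε' hgap
end

section
/- Let ε > 0 and ρ > 0. Suppose {P_1,…,P_k} is a partition of P into nonempty clusters and μ_1,…,μ_k ∈ ℝ^d are points such that ‖p − μ_i‖ ≤ ε/ρ for every i and every p ∈ P_i. Then for every set X of models and every per-point cost function cost : ℝ^d × X → ℝ with cost(p,x) ≥ 1 for all p and x, and ρ-Lipschitz in the point argument, S = {μ_1,…,μ_k} with weights u_i := Σ_{p∈P_i} w_p is an ε-coreset for P w.r.t. the sum cost, and S is an ε-coreset w.r.t. the maximum cost. (Strengthened form of Corollary 1, equation (10): it suffices that the distance between each data point and its representing center is bounded by ε/ρ.) -/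
open scoped Classical

/-- Strengthened Corollary 1 (equation (10)): if `P` is partitioned into nonempty clusters
`Pc i` with representatives `μ i` such that `‖p − μ i‖ ≤ ε/ρ` for all `p ∈ Pc i`, then for
every model set `X` and every per-point cost that is `≥ 1` and `ρ`-Lipschitz in the point,
`{μ i}` with weights `Σ_{p∈Pc i} w_p` is an `ε`-coreset for `P` w.r.t. the sum cost, and an
`ε`-coreset w.r.t. the maximum cost. -/
theorem corollary1_strengthened {d : ℕ}
    (P : Finset (Pt d)) (hP : P.Nonempty)
    (w : Pt d → ℝ) (hw : ∀ p ∈ P, 0 < w p)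
    (ε ρ : ℝ) (hε : 0 < ε) (hρ : 0 < ρ)
    (k : ℕ) (hk : 0 < k)
    (Pc : Fin k → Finset (Pt d))
    (hne : ∀ i, (Pc i).Nonempty)
    (hdisj : ∀ i j, i ≠ j → Disjoint (Pc i) (Pc j))
    (hcover : P = Finset.univ.biUnion Pc)
    (μ : Fin k → Pt d)
    (hclose : ∀ i, ∀ p ∈ Pc i, dist p (μ i) ≤ ε / ρ)
    (X : Type*) (cost : Pt d → X → ℝ)
    (hc1 : ∀ p x, 1 ≤ cost p x)
    (hlip : ∀ (x : X) (p p' : Pt d), |cost p x - cost p' x| ≤ ρ * dist p p') :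
    ∀ x : X,
      ((1 - ε) * (∑ p ∈ P, w p * cost p x) ≤ (∑ i, (∑ p ∈ Pc i, w p) * cost (μ i) x) ∧
       (∑ i, (∑ p ∈ Pc i, w p) * cost (μ i) x) ≤ (1 + ε) * (∑ p ∈ P, w p * cost p x)) ∧
      ((1 - ε) * P.sup' hP (fun p => cost p x)
          ≤ Finset.univ.sup' (Finset.univ_nonempty_iff.mpr ⟨⟨0, hk⟩⟩) (fun i => cost (μ i) x) ∧
       Finset.univ.sup' (Finset.univ_nonempty_iff.mpr ⟨⟨0, hk⟩⟩) (fun i => cost (μ i) x)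
          ≤ (1 + ε) * P.sup' hP (fun p => cost p x)) := by
  intro x
  -- basic facts
  have hmemP : ∀ i, ∀ p ∈ Pc i, p ∈ P := by
    intro i p hp
    rw [hcover, Finset.mem_biUnion]
    exact ⟨i, Finset.mem_univ i, hp⟩
  have key : ∀ i, ∀ p ∈ Pc i,
      (1 - ε) * cost p x ≤ cost (μ i) x ∧ cost (μ i) x ≤ (1 + ε) * cost p x := by
    intro i p hp
    have hd := hclose i p hp
    have hl := hlip x p (μ i)
    have hεb : |cost p x - cost (μ i) x| ≤ ε := by
      calc |cost p x - cost (μ i) x| ≤ ρ * dist p (μ i) := hl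
        _ ≤ ρ * (ε / ρ) := by
            exact mul_le_mul_of_nonneg_left hd hρ.le
        _ = ε := by field_simp
    have h1 := (abs_le.mp hεb).1
    have h2 := (abs_le.mp hεb).2
    have hc := hc1 p x
    constructor <;> nlinarith
  have hwnn : ∀ i, ∀ p ∈ Pc i, 0 ≤ w p := fun i p hp => (hw p (hmemP i p hp)).le
  have hsum_split : ∀ f : Pt d → ℝ, (∑ p ∈ P, f p) = ∑ i, ∑ p ∈ Pc i, f p := by
    intro f
    rw [hcover]
    exact Finset.sum_biUnion fun i _ j _ hij => hdisj i j hij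
  have hrw : ∀ i, (∑ p ∈ Pc i, w p) * cost (μ i) x = ∑ p ∈ Pc i, w p * cost (μ i) x := by
    intro i; rw [Finset.sum_mul]
  constructor
  · constructor
    · rw [hsum_split (fun p => w p * cost p x), Finset.mul_sum]
      rw [Finset.sum_congr rfl fun i _ => hrw i]
      refine Finset.sum_le_sum fun i _ => ?_
      rw [Finset.mul_sum]
      refine Finset.sum_le_sum fun p hp => ?_
      have := (key i p hp).1
      have := hwnn i p hp
      nlinarith
    · rw [hsum_split (fun p => w p * cost p x), Finset.mul_sum]
      rw [Finset.sum_congr rfl fun i _ => hrw i]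
      refine Finset.sum_le_sum fun i _ => ?_
      rw [Finset.mul_sum]
      refine Finset.sum_le_sum fun p hp => ?_
      have := (key i p hp).2
      have := hwnn i p hp
      nlinarith
  · have hne' : (Finset.univ : Finset (Fin k)).Nonempty := Finset.univ_nonempty_iff.mpr ⟨⟨0, hk⟩⟩
    constructor
    · obtain ⟨q, hq, hqeq⟩ := Finset.exists_mem_eq_sup' hP (fun p => cost p x)
      have hq' : q ∈ Finset.univ.biUnion Pc := by rw [← hcover]; exact hq
      obtain ⟨i, _, hqi⟩ := Finset.mem_biUnion.mp hq'
      calc (1 - ε) * P.sup' hP (fun p => cost p x) = (1 - ε) * cost q x := by rw [hqeq]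
        _ ≤ cost (μ i) x := (key i q hqi).1
        _ ≤ _ := Finset.le_sup' (fun i => cost (μ i) x) (Finset.mem_univ i)
    · refine Finset.sup'_le _ _ fun i _ => ?_
      obtain ⟨p, hp⟩ := hne i
      have h1 := (key i p hp).2
      have h2 : cost p x ≤ P.sup' hP (fun p => cost p x) :=
        Finset.le_sup' (f := fun q => cost q x) (hmemP i p hp)
      have hpos : (0:ℝ) ≤ 1 + ε := by linarith
      calc cost (μ i) x ≤ (1 + ε) * cost p x := h1
        _ ≤ (1 + ε) * P.sup' hP (fun p => cost p x) := mul_le_mul_of_nonneg_left h2 hpos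
end

section
/- Let ε > 0, ρ > 0, and k ≥ 1. Let {P̃_1,…,P̃_k} be a partition of P into nonempty clusters; for each i let μ_i ∈ ℝ^d attain opt(P̃_i,1) and let p*_i ∈ P̃_i maximize w_p·‖p−μ_i‖^z over P̃_i. Suppose (modeling the costs of a k-clustering algorithm satisfying Assumptions 1–3) there exist real numbers A and a_1,…,a_k with A ≤ Σ_{i=1}^k a_i, a_i ≤ c(P̃_i,{μ_i,p*_i}) for every i, and Σ_{i=1}^k c(P̃_i,{μ_i}) − A ≤ w_min·(ε/ρ)^z. Then for every set X of models and every per-point cost function cost : ℝ^d × X → ℝ with cost(p,x) ≥ 1 for all p and x, and ρ-Lipschitz in the point argument, S = {μ_1,…,μ_k} with weights u_i := Σ_{p∈P̃_i} w_p is an ε-coreset for P w.r.t. the sum cost, and S is an ε-coreset w.r.t. the maximum cost. (Theorem 2) -/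
open scoped Classical

/-!
Adding the farthest point `p*_i` of a cluster as a second center saves at least
`w(p*_i)·‖p*_i − μ_i‖^z`, since `p*_i` then costs nothing. The assumptions bound the total
saving over all clusters by `w_min·(ε/ρ)^z`, so every point lies within `ε/ρ` of its center.
By the Lipschitz property each point's cost then differs from its center's by at most `ε`,
which is at most an `ε`-fraction of either, as costs are at least `1`; summing over clusters,
or taking maxima, gives both coreset inequalities.
-/

open Finset Function

section ClusterCost

variable {d : ℕ} {z : ℝ} {w : Pt d → ℝ}

lemma cCost_singleton (Q : Finset (Pt d)) (c : Pt d) :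
    cCost z w Q {c} = ∑ p ∈ Q, w p * dist p c ^ z := by
  simp only [cCost, coe_singleton, Set.image_singleton, csInf_singleton]

lemma cCost_pair (Q : Finset (Pt d)) (c c' : Pt d) :
    cCost z w Q {c, c'} = ∑ p ∈ Q, w p * min (dist p c) (dist p c') ^ z := by
  simp only [cCost, coe_insert, coe_singleton, Set.image_pair, csInf_pair]

lemma mul_dist_rpow_le_cCost_sub_cCost_pair (hz : 0 < z) {Q : Finset (Pt d)}
    (hw : ∀ p ∈ Q, 0 ≤ w p) (c : Pt d) {p₀ : Pt d} (hp₀ : p₀ ∈ Q) :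
    w p₀ * dist p₀ c ^ z ≤ cCost z w Q {c} - cCost z w Q {c, p₀} := by
  rw [cCost_singleton, cCost_pair, ← sum_sub_distrib]
  have hsaving : ∀ p ∈ Q, 0 ≤ w p * dist p c ^ z - w p * min (dist p c) (dist p p₀) ^ z :=
    fun p hp => sub_nonneg.2 <| mul_le_mul_of_nonneg_left
      (Real.rpow_le_rpow (le_min dist_nonneg dist_nonneg) (min_le_left _ _) hz.le) (hw p hp)
  refine le_of_eq_of_le ?_ (single_le_sum hsaving hp₀)
  rw [dist_self, min_eq_right dist_nonneg, Real.zero_rpow hz.ne', mul_zero, sub_zero]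

lemma le_of_mul_rpow_le_mul_rpow (hz : 0 < z) {t r v W : ℝ} (ht : 0 ≤ t) (hr : 0 ≤ r)
    (hv : 0 < v) (hW : W ≤ v) (h : v * t ^ z ≤ W * r ^ z) : t ≤ r := by
  have : v * t ^ z ≤ v * r ^ z :=
    h.trans (mul_le_mul_of_nonneg_right hW (Real.rpow_nonneg hr z))
  exact (Real.rpow_le_rpow_iff ht hr hz).1 (le_of_mul_le_mul_left this hv)

lemma dist_le_of_sum_cCost_sub_le (hz : 0 < z) {ι : Type*} [Fintype ι]
    {Pc : ι → Finset (Pt d)} (hw : ∀ i, ∀ p ∈ Pc i, 0 < w p) {μ pstar : ι → Pt d}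
    (hpstarM : ∀ i, pstar i ∈ Pc i)
    (hpstar : ∀ i, ∀ p ∈ Pc i,
      w p * dist p (μ i) ^ z ≤ w (pstar i) * dist (pstar i) (μ i) ^ z)
    {W r : ℝ} (hW : ∀ i, ∀ p ∈ Pc i, W ≤ w p) (hr : 0 ≤ r)
    (hsaving : ∑ i, (cCost z w (Pc i) {μ i} - cCost z w (Pc i) {μ i, pstar i}) ≤ W * r ^ z)
    (i : ι) {p : Pt d} (hp : p ∈ Pc i) : dist p (μ i) ≤ r := by
  have hgain : ∀ j, w (pstar j) * dist (pstar j) (μ j) ^ z ≤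
      cCost z w (Pc j) {μ j} - cCost z w (Pc j) {μ j, pstar j} := fun j =>
    mul_dist_rpow_le_cCost_sub_cCost_pair hz (fun p hp => (hw j p hp).le) (μ j) (hpstarM j)
  have hgain_nonneg :
      ∀ j ∈ univ, 0 ≤ cCost z w (Pc j) {μ j} - cCost z w (Pc j) {μ j, pstar j} :=
    fun j _ => (mul_nonneg (hw j _ (hpstarM j)).le (Real.rpow_nonneg dist_nonneg z)).trans (hgain j)
  refine le_of_mul_rpow_le_mul_rpow hz dist_nonneg hr (hw i p hp) (hW i p hp) ?_
  calc w p * dist p (μ i) ^ z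
      ≤ w (pstar i) * dist (pstar i) (μ i) ^ z := hpstar i p hp
    _ ≤ cCost z w (Pc i) {μ i} - cCost z w (Pc i) {μ i, pstar i} := hgain i
    _ ≤ ∑ j, (cCost z w (Pc j) {μ j} - cCost z w (Pc j) {μ j, pstar j}) :=
      single_le_sum hgain_nonneg (mem_univ i)
    _ ≤ W * r ^ z := hsaving

end ClusterCost

lemma one_sub_mul_le_and_le_one_add_mul_of_abs_sub_le {a b ε : ℝ} (ha : 1 ≤ a)
    (h : |a - b| ≤ ε) : (1 - ε) * a ≤ b ∧ b ≤ (1 + ε) * a := by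
  have hε : 0 ≤ ε := (abs_nonneg _).trans h
  rw [abs_le] at h
  constructor <;> nlinarith

section Partition

variable {ι α : Type*} [Fintype ι] [DecidableEq α] {Pc : ι → Finset α} {w f : α → ℝ}
  {g : ι → ℝ} {c : ℝ}

lemma mul_sum_biUnion_le_sum_mul (hdisj : Pairwise (Disjoint on Pc))
    (hw : ∀ i, ∀ p ∈ Pc i, 0 ≤ w p) (hle : ∀ i, ∀ p ∈ Pc i, c * f p ≤ g i) :
    c * ∑ p ∈ univ.biUnion Pc, w p * f p ≤ ∑ i, (∑ p ∈ Pc i, w p) * g i := by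
  rw [sum_biUnion (hdisj.set_pairwise _), mul_sum]
  refine sum_le_sum fun i _ => ?_
  rw [sum_mul, mul_sum]
  exact sum_le_sum fun p hp => by nlinarith [hw i p hp, hle i p hp]

lemma sum_mul_le_mul_sum_biUnion (hdisj : Pairwise (Disjoint on Pc))
    (hw : ∀ i, ∀ p ∈ Pc i, 0 ≤ w p) (hle : ∀ i, ∀ p ∈ Pc i, g i ≤ c * f p) :
    ∑ i, (∑ p ∈ Pc i, w p) * g i ≤ c * ∑ p ∈ univ.biUnion Pc, w p * f p := by
  rw [sum_biUnion (hdisj.set_pairwise _), mul_sum]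
  refine sum_le_sum fun i _ => ?_
  rw [sum_mul, mul_sum]
  exact sum_le_sum fun p hp => by nlinarith [hw i p hp, hle i p hp]

lemma mul_sup'_biUnion_le_sup' (hP : (univ.biUnion Pc).Nonempty) (hι : (univ : Finset ι).Nonempty)
    (hle : ∀ i, ∀ p ∈ Pc i, c * f p ≤ g i) :
    c * (univ.biUnion Pc).sup' hP f ≤ univ.sup' hι g := by
  obtain ⟨p, hp, hpmax⟩ := exists_mem_eq_sup' hP f
  obtain ⟨i, -, hpi⟩ := mem_biUnion.1 hp
  rw [hpmax]
  exact (hle i p hpi).trans (le_sup' g (mem_univ i))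

lemma sup'_le_mul_sup'_biUnion (hP : (univ.biUnion Pc).Nonempty) (hι : (univ : Finset ι).Nonempty)
    (hne : ∀ i, (Pc i).Nonempty) (hc : 0 ≤ c) (hle : ∀ i, ∀ p ∈ Pc i, g i ≤ c * f p) :
    univ.sup' hι g ≤ c * (univ.biUnion Pc).sup' hP f := by
  refine sup'_le _ _ fun i _ => ?_
  obtain ⟨p, hp⟩ := hne i
  exact (hle i p hp).trans <|
    mul_le_mul_of_nonneg_left (le_sup' f (mem_biUnion.2 ⟨i, mem_univ i, hp⟩)) hc

end Partition

theorem theorem2_general {d : ℕ} (z : ℝ) (hz : 0 < z)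
    (P : Finset (Pt d)) (hP : P.Nonempty)
    (w : Pt d → ℝ) (hw : ∀ p ∈ P, 0 < w p)
    (k : ℕ) (hk : 0 < k)
    (Pc : Fin k → Finset (Pt d))
    (hne : ∀ i, (Pc i).Nonempty)
    (hdisj : ∀ i j, i ≠ j → Disjoint (Pc i) (Pc j))
    (hcover : P = Finset.univ.biUnion Pc)
    (μ : Fin k → Pt d)
    (pstar : Fin k → Pt d) (hpstarM : ∀ i, pstar i ∈ Pc i)
    (hpstar : ∀ i, ∀ p ∈ Pc i,
      w p * dist p (μ i) ^ z ≤ w (pstar i) * dist (pstar i) (μ i) ^ z)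
    (A : ℝ) (a : Fin k → ℝ)
    (hA : A ≤ ∑ i, a i)
    (ha : ∀ i, a i ≤ cCost z w (Pc i) {μ i, pstar i})
    (ε ρ : ℝ) (hε : 0 < ε) (hρ : 0 < ρ)
    (hgap : (∑ i, cCost z w (Pc i) {μ i}) - A ≤ P.inf' hP w * (ε / ρ) ^ z)
    (X : Type*) (cost : Pt d → X → ℝ)
    (hc1 : ∀ p x, 1 ≤ cost p x)
    (hlip : ∀ (x : X) (p p' : Pt d), |cost p x - cost p' x| ≤ ρ * dist p p') :
    ∀ x : X,
      ((1 - ε) * (∑ p ∈ P, w p * cost p x) ≤ (∑ i, (∑ p ∈ Pc i, w p) * cost (μ i) x) ∧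
       (∑ i, (∑ p ∈ Pc i, w p) * cost (μ i) x) ≤ (1 + ε) * (∑ p ∈ P, w p * cost p x)) ∧
      ((1 - ε) * P.sup' hP (fun p => cost p x)
          ≤ Finset.univ.sup' (Finset.univ_nonempty_iff.mpr ⟨⟨0, hk⟩⟩) (fun i => cost (μ i) x) ∧
       Finset.univ.sup' (Finset.univ_nonempty_iff.mpr ⟨⟨0, hk⟩⟩) (fun i => cost (μ i) x)
          ≤ (1 + ε) * P.sup' hP (fun p => cost p x)) := by
  subst hcover
  have hmem : ∀ i, ∀ p ∈ Pc i, p ∈ univ.biUnion Pc := fun i _ hp => mem_biUnion.2 ⟨i, mem_univ i, hp⟩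
  have hwPc : ∀ i, ∀ p ∈ Pc i, 0 < w p := fun i p hp => hw p (hmem i p hp)
  have hsaving : ∑ i, (cCost z w (Pc i) {μ i} - cCost z w (Pc i) {μ i, pstar i}) ≤
      (univ.biUnion Pc).inf' hP w * (ε / ρ) ^ z := by
    rw [sum_sub_distrib]
    linarith [sum_le_sum fun i (_ : i ∈ univ) => ha i]
  have hradius : ∀ i, ∀ p ∈ Pc i, dist p (μ i) ≤ ε / ρ := fun i p hp =>
    dist_le_of_sum_cCost_sub_le hz hwPc hpstarM hpstar (fun i p hp => inf'_le w (hmem i p hp))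
      (div_pos hε hρ).le hsaving i hp
  intro x
  have hclose : ∀ i, ∀ p ∈ Pc i, (1 - ε) * cost p x ≤ cost (μ i) x ∧
      cost (μ i) x ≤ (1 + ε) * cost p x := fun i p hp =>
    one_sub_mul_le_and_le_one_add_mul_of_abs_sub_le (hc1 p x) <| (hlip x p (μ i)).trans <| by
      calc ρ * dist p (μ i)
          ≤ ρ * (ε / ρ) := mul_le_mul_of_nonneg_left (hradius i p hp) hρ.le
        _ = ε := mul_div_cancel₀ ε hρ.ne'
  have hdisj' : Pairwise (Disjoint on Pc) := fun i j hij => hdisj i j hij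
  have hwPc' : ∀ i, ∀ p ∈ Pc i, 0 ≤ w p := fun i p hp => (hwPc i p hp).le
  exact ⟨⟨mul_sum_biUnion_le_sum_mul hdisj' hwPc' fun i p hp => (hclose i p hp).1,
      sum_mul_le_mul_sum_biUnion hdisj' hwPc' fun i p hp => (hclose i p hp).2⟩,
    ⟨mul_sup'_biUnion_le_sup' hP _ fun i p hp => (hclose i p hp).1,
      sup'_le_mul_sup'_biUnion hP _ hne (by linarith) fun i p hp => (hclose i p hp).2⟩⟩

/-- Theorem 2: let `{Pc i}` be a partition of `P` into nonempty clusters, `μ i` the optimal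
1-clustering center of `Pc i`, and `p*_i` a maximizer of `w_p·‖p−μ i‖^z` over `Pc i`.
Suppose (modeling Assumptions 1–3) there are reals `A` and `a i` with `A ≤ Σ a i`,
`a i ≤ c(Pc i, {μ i, p*_i})`, and `Σ_i c(Pc i,{μ i}) − A ≤ w_min·(ε/ρ)^z`. Then for every
model set `X` and every per-point cost that is `≥ 1` and `ρ`-Lipschitz in the point,
`{μ i}` with weights `Σ_{p∈Pc i} w_p` is an `ε`-coreset for `P` w.r.t. the sum cost and
the maximum cost. -/
theorem theorem2 {d : ℕ} (z : ℝ) (hz : 0 < z)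
    (P : Finset (Pt d)) (hP : P.Nonempty)
    (w : Pt d → ℝ) (hw : ∀ p ∈ P, 0 < w p)
    (k : ℕ) (hk : 0 < k)
    (Pc : Fin k → Finset (Pt d))
    (hne : ∀ i, (Pc i).Nonempty)
    (hdisj : ∀ i j, i ≠ j → Disjoint (Pc i) (Pc j))
    (hcover : P = Finset.univ.biUnion Pc)
    (μ : Fin k → Pt d) (hμ : ∀ i, cCost z w (Pc i) {μ i} = optCost z w (Pc i) 1)
    (pstar : Fin k → Pt d) (hpstarM : ∀ i, pstar i ∈ Pc i)
    (hpstar : ∀ i, ∀ p ∈ Pc i,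
      w p * dist p (μ i) ^ z ≤ w (pstar i) * dist (pstar i) (μ i) ^ z)
    (A : ℝ) (a : Fin k → ℝ)
    (hA : A ≤ ∑ i, a i)
    (ha : ∀ i, a i ≤ cCost z w (Pc i) {μ i, pstar i})
    (ε ρ : ℝ) (hε : 0 < ε) (hρ : 0 < ρ)
    (hgap : (∑ i, cCost z w (Pc i) {μ i}) - A ≤ P.inf' hP w * (ε / ρ) ^ z)
    (X : Type*) (cost : Pt d → X → ℝ)
    (hc1 : ∀ p x, 1 ≤ cost p x)
    (hlip : ∀ (x : X) (p p' : Pt d), |cost p x - cost p' x| ≤ ρ * dist p p') :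
    ∀ x : X,
      ((1 - ε) * (∑ p ∈ P, w p * cost p x) ≤ (∑ i, (∑ p ∈ Pc i, w p) * cost (μ i) x) ∧
       (∑ i, (∑ p ∈ Pc i, w p) * cost (μ i) x) ≤ (1 + ε) * (∑ p ∈ P, w p * cost p x)) ∧
      ((1 - ε) * P.sup' hP (fun p => cost p x)
          ≤ Finset.univ.sup' (Finset.univ_nonempty_iff.mpr ⟨⟨0, hk⟩⟩) (fun i => cost (μ i) x) ∧
       Finset.univ.sup' (Finset.univ_nonempty_iff.mpr ⟨⟨0, hk⟩⟩) (fun i => cost (μ i) x)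
          ≤ (1 + ε) * P.sup' hP (fun p => cost p x)) :=
  theorem2_general z hz P hP w hw k hk Pc hne hdisj hcover μ pstar hpstarM hpstar A a hA ha ε ρ hε
    hρ hgap X cost hc1 hlip
end

section
/- Let x : ℝ^d → ℝ^d be a linear map with operator norm ‖x‖ ≤ l for some l ≥ 0, and let p, p' ∈ ℝ^d and Δ ≥ 0 satisfy ‖p − x(p)‖ ≤ Δ and ‖p' − x(p')‖ ≤ Δ. Then |‖p − x(p)‖² − ‖p' − x(p')‖²| ≤ 2Δ·(l+1)·‖p − p'‖. (Appendix B, Lipschitz constant for PCA: with x = WWᵀ where W consists of l orthonormal principal components, ‖x‖ ≤ l, so the PCA per-point cost is 2Δ(l+1)-Lipschitz-continuous in the point argument.) -/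
open scoped Classical

/-- Appendix B (PCA): for a linear map `x` of operator norm at most `l`, the PCA per-point
cost `‖p − x(p)‖²` is `2Δ(l+1)`-Lipschitz in the point, provided both residuals are
bounded by `Δ`. -/
theorem pca_lipschitz {d : ℕ} (l Δ : ℝ) (hl : 0 ≤ l) (hΔ : 0 ≤ Δ)
    (x : Pt d →L[ℝ] Pt d) (hx : ‖x‖ ≤ l)
    (p p' : Pt d)
    (hp : dist p (x p) ≤ Δ) (hp' : dist p' (x p') ≤ Δ) :
    |dist p (x p) ^ 2 - dist p' (x p') ^ 2| ≤ 2 * Δ * (l + 1) * dist p p' := by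
  set a := dist p (x p) with ha
  set b := dist p' (x p') with hb
  have ha0 : 0 ≤ a := dist_nonneg
  have hb0 : 0 ≤ b := dist_nonneg
  have hab : |a - b| ≤ (l + 1) * dist p p' := by
    have h1 : |a - b| ≤ dist (p - x p) (p' - x p') := by
      have : a = ‖p - x p‖ := by rw [ha, dist_eq_norm]
      have hb' : b = ‖p' - x p'‖ := by rw [hb, dist_eq_norm]
      rw [this, hb', dist_eq_norm]
      exact abs_norm_sub_norm_le _ _
    have h2 : dist (p - x p) (p' - x p') ≤ (l + 1) * dist p p' := by
      have : p - x p - (p' - x p') = (p - p') - x (p - p') := by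
        rw [map_sub]; abel
      rw [dist_eq_norm, this]
      calc ‖(p - p') - x (p - p')‖ ≤ ‖p - p'‖ + ‖x (p - p')‖ := norm_sub_le _ _
        _ ≤ ‖p - p'‖ + l * ‖p - p'‖ := by
            gcongr
            exact le_trans (x.le_opNorm _) (by gcongr)
        _ = (l + 1) * dist p p' := by rw [dist_eq_norm]; ring
    linarith
  have key : |a ^ 2 - b ^ 2| = |a + b| * |a - b| := by
    rw [← abs_mul]; ring_nf
  rw [key]
  have h3 : |a + b| ≤ 2 * Δ := by
    rw [abs_of_nonneg (by linarith)]; linarith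
  calc |a + b| * |a - b| ≤ (2 * Δ) * ((l + 1) * dist p p') :=
        mul_le_mul h3 hab (abs_nonneg _) (by linarith)
    _ = 2 * Δ * (l + 1) * dist p p' := by ring
end

section
/- With the DRCC weighting scheme below, for every x ∈ X: Σ_{p∈P} f_x(p) − Σ_{q∈S} u'_q·f_x(q) = Σ_{p∈P} w_p·cost(p,x) − (Σ_{q∈S} u_q·cost(q,x) + Σ_{b∈B} u_b·cost(b,x)); that is, the approximation error of the coreset S ∪ B with weights u equals the sampling error of the auxiliary functions f_x. (Key algebraic identity in the proof of Theorem 3) -/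
open scoped Classical

/-- Key algebraic identity in the proof of Theorem 3: with the DRCC weighting scheme, the
approximation error of the coreset `S ∪ B` equals the sampling error of the auxiliary
functions `f_x`. -/
theorem drcc_identity {d : ℕ}
    (P : Finset (Pt d)) (hP : P.Nonempty)
    (w : Pt d → ℝ) (hw : ∀ p ∈ P, 0 < w p)
    (B : Finset (Pt d)) (hB : B.Nonempty)
    (bp : Pt d → Pt d)
    (hbpB : ∀ p ∈ P, bp p ∈ B)
    (hbpmin : ∀ p ∈ P, dist p (bp p) = sInf ((fun b => dist p b) '' (B : Set (Pt d))))
    (m : Pt d → ℝ) (hm : ∀ p, m p = w p * dist p (bp p))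
    (S : Finset (Pt d)) (hSP : S ⊆ P) (hS : S.Nonempty)
    (hmpos : ∀ q ∈ S, 0 < m q)
    (t : ℕ) (ht : t = S.card)
    (C : ℝ) (hC : C = ∑ p ∈ P, m p)
    (u' : Pt d → ℝ) (hu' : ∀ q, u' q = C / ((t : ℝ) * m q))
    (u : Pt d → ℝ) (hu : ∀ q, u q = u' q * w q)
    (ub : Pt d → ℝ)
    (hub : ∀ b, ub b = (∑ p ∈ P.filter fun p => bp p = b, w p)
        - ∑ q ∈ (P.filter fun p => bp p = b) ∩ S, u q)
    (X : Type*) (cost : Pt d → X → ℝ) (ρ : ℝ)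
    (f : X → Pt d → ℝ)
    (hf : ∀ x p, f x p = w p * (cost p x - cost (bp p) x + ρ * dist p (bp p))) :
    ∀ x : X,
      (∑ p ∈ P, f x p) - (∑ q ∈ S, u' q * f x q)
        = (∑ p ∈ P, w p * cost p x)
          - ((∑ q ∈ S, u q * cost q x) + (∑ b ∈ B, ub b * cost b x)) := by
  intro x
  have ht0 : (t : ℝ) ≠ 0 := by
    rw [ht]
    exact_mod_cast Finset.card_ne_zero_of_mem hS.choose_spec
  -- sum of u' q * m q over S equals C
  have hum : ∀ q ∈ S, u' q * m q = C / t := by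
    intro q hq
    have hmq : m q ≠ 0 := (hmpos q hq).ne'
    rw [hu']
    field_simp
  have hsumC : ∑ q ∈ S, u' q * m q = C := by
    rw [Finset.sum_congr rfl hum, Finset.sum_const, ← ht, nsmul_eq_mul]
    field_simp
  have key1 : ∑ p ∈ P, f x p
      = (∑ p ∈ P, w p * cost p x) - (∑ p ∈ P, w p * cost (bp p) x) + ρ * C := by
    rw [hC, Finset.mul_sum, ← Finset.sum_sub_distrib, ← Finset.sum_add_distrib]
    apply Finset.sum_congr rfl
    intro p _
    rw [hf, hm]; ring
  have key2 : ∑ q ∈ S, u' q * f x q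
      = (∑ q ∈ S, u q * cost q x) - (∑ q ∈ S, u q * cost (bp q) x) + ρ * C := by
    rw [← hsumC, Finset.mul_sum, ← Finset.sum_sub_distrib, ← Finset.sum_add_distrib]
    apply Finset.sum_congr rfl
    intro q _
    rw [hf, hu, hm]; ring
  have key3 : ∑ b ∈ B, ub b * cost b x
      = (∑ p ∈ P, w p * cost (bp p) x) - (∑ q ∈ S, u q * cost (bp q) x) := by
    have h1 : ∑ b ∈ B, (∑ p ∈ P.filter fun p => bp p = b, w p) * cost b x
        = ∑ p ∈ P, w p * cost (bp p) x := by
      rw [← Finset.sum_fiberwise_of_maps_to hbpB (fun p => w p * cost (bp p) x)]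
      apply Finset.sum_congr rfl
      intro b _
      rw [Finset.sum_mul]
      apply Finset.sum_congr rfl
      intro p hp
      rw [(Finset.mem_filter.mp hp).2]
    have hinter : ∀ b, (P.filter fun p => bp p = b) ∩ S = S.filter fun p => bp p = b := by
      intro b
      ext q
      simp only [Finset.mem_inter, Finset.mem_filter]
      constructor
      · rintro ⟨⟨_, h⟩, hq⟩; exact ⟨hq, h⟩
      · rintro ⟨hq, h⟩; exact ⟨⟨hSP hq, h⟩, hq⟩
    have h2 : ∑ b ∈ B, (∑ q ∈ (P.filter fun p => bp p = b) ∩ S, u q) * cost b x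
        = ∑ q ∈ S, u q * cost (bp q) x := by
      simp only [hinter]
      rw [← Finset.sum_fiberwise_of_maps_to (fun q hq => hbpB q (hSP hq))
        (fun q => u q * cost (bp q) x)]
      apply Finset.sum_congr rfl
      intro b _
      rw [Finset.sum_mul]
      apply Finset.sum_congr rfl
      intro q hq
      rw [(Finset.mem_filter.mp hq).2]
    rw [← h1, ← h2, ← Finset.sum_sub_distrib]
    apply Finset.sum_congr rfl
    intro b _
    rw [hub]; ring
  rw [key1, key2, key3]; ring
end
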